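/- Let φ be a positive planar 3-CNF formula and let G'_φ be the graph obtained from the variable-clause incidence graph of φ by attaching a distinct path on 2 vertices to each variable vertex x_i (forming an induced path on 3 vertices ending at x_i). Then φ has a truth assignment in which every clause contains exactly one true variable if and only if G'_φ is 1-CFON*-choosable. -/
import Mathlib

/-- The graph `G'_φ`: the variable-clause incidence graph of a positive 3-CNF
formula with clauses `C`, together with a pendant path on two vertices
`(i,0), (i,1)` attached to each variable vertex `x_i`. -/
def phiGraphON (n m : ℕ) (C : Fin m → Finset (Fin n)) :
    SimpleGraph ((Fin n ⊕ Fin m) ⊕ (Fin n × Fin 2)) :=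
  SimpleGraph.fromRel (fun x y => match x, y with
    | Sum.inl (Sum.inl i), Sum.inl (Sum.inr j) => i ∈ C j
    | Sum.inl (Sum.inl i), Sum.inr p => p = (i, 0)
    | Sum.inr p, Sum.inr q => p.1 = q.1 ∧ p.2 = 0 ∧ q.2 = 1
    | _, _ => False)

/-- The "selected" set determined by a truth assignment `t`: a true variable
vertex, the first pendant vertex of every variable, and the second pendant
vertex of each false variable. -/
def selON (n m : ℕ) (t : Fin n → Bool) : ((Fin n ⊕ Fin m) ⊕ (Fin n × Fin 2)) → Bool :=
  fun u => match u with
    | Sum.inl (Sum.inl i) => t i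
    | Sum.inl (Sum.inr _) => false
    | Sum.inr p => if p.2 = 0 then true else !(t p.1)

/-- If `t` solves the 1-in-3 problem then every vertex of `G'_φ` has exactly one
neighbor in the selected set. -/
lemma selON_exact (n m : ℕ) (C : Fin m → Finset (Fin n)) (t : Fin n → Bool)
    (ht : ∀ j : Fin m, ∃! i, i ∈ C j ∧ t i = true) :
    ∀ v, ∃! u, (phiGraphON n m C).Adj v u ∧ selON n m t u = true := by
  intro v
  rcases v with ((i | j) | ⟨i, b⟩)
  · refine ⟨Sum.inr (i, 0), ⟨?_, by simp [selON]⟩, ?_⟩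
    · simp [phiGraphON, SimpleGraph.fromRel_adj]
    · rintro ((i' | j') | ⟨i', b'⟩) ⟨hadj, hS⟩ <;>
        simp_all [phiGraphON, selON, SimpleGraph.fromRel_adj, Prod.ext_iff]
  · obtain ⟨i, ⟨hiC, hit⟩, huniq⟩ := ht j
    refine ⟨Sum.inl (Sum.inl i), ⟨?_, by simpa [selON]⟩, ?_⟩
    · simp [phiGraphON, SimpleGraph.fromRel_adj, hiC]
    · rintro ((i' | j') | ⟨i', b'⟩) ⟨hadj, hS⟩ <;>
        simp_all [phiGraphON, selON, SimpleGraph.fromRel_adj, Prod.ext_iff]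
  · fin_cases b
    · by_cases hti : t i = true
      · refine ⟨Sum.inl (Sum.inl i), ⟨?_, by simpa [selON]⟩, ?_⟩
        · simp [phiGraphON, SimpleGraph.fromRel_adj]
        · rintro ((i' | j') | ⟨i', b'⟩) ⟨hadj, hS⟩ <;>
            simp_all [phiGraphON, selON, SimpleGraph.fromRel_adj, Prod.ext_iff]
      · refine ⟨Sum.inr (i, 1), ⟨?_, by simp_all [selON]⟩, ?_⟩
        · simp [phiGraphON, SimpleGraph.fromRel_adj]
        · rintro ((i' | j') | ⟨i', b'⟩) ⟨hadj, hS⟩ <;>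
            simp_all [phiGraphON, selON, SimpleGraph.fromRel_adj, Prod.ext_iff]
    · refine ⟨Sum.inr (i, 0), ⟨?_, by simp [selON]⟩, ?_⟩
      · simp [phiGraphON, SimpleGraph.fromRel_adj, Prod.ext_iff]
      · rintro ((i' | j') | ⟨i', b'⟩) ⟨hadj, hS⟩ <;>
          simp_all [phiGraphON, selON, SimpleGraph.fromRel_adj, Prod.ext_iff]

/-- a positive 3-CNF formula has a truth assignment in which
every clause sees exactly one true variable iff `G'_φ` is 1-CFON*-choosable. -/
theorem stmt_15 (n m : ℕ) (C : Fin m → Finset (Fin n))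
    (hC : ∀ j, (C j).card = 3) :
    (∃ t : Fin n → Bool, ∀ j : Fin m, ∃! i, i ∈ C j ∧ t i = true) ↔
    (∀ L : ((Fin n ⊕ Fin m) ⊕ (Fin n × Fin 2)) → Finset ℕ,
      (∀ v, (L v).card = 1) →
      ∃ c : ((Fin n ⊕ Fin m) ⊕ (Fin n × Fin 2)) → Option ℕ,
        (∀ v a, c v = some a → a ∈ L v) ∧
        ∀ v, ∃ a, ∃! u, (phiGraphON n m C).Adj v u ∧ c u = some a) := by
  constructor
  · rintro ⟨t, ht⟩ L hL
    have hLne : ∀ v, (L v).Nonempty := fun v => Finset.card_pos.mp (by rw [hL v]; norm_num)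
    refine ⟨fun v => if selON n m t v then some ((L v).min' (hLne v)) else none, ?_, ?_⟩
    · intro v a hva
      by_cases h : selON n m t v = true
      · simp only [h, if_pos] at hva
        exact (Option.some_inj.mp hva) ▸ (L v).min'_mem (hLne v)
      · simp [h] at hva
    · intro v
      obtain ⟨u, ⟨hadj, hSu⟩, huniq⟩ := selON_exact n m C t ht v
      refine ⟨(L u).min' (hLne u), u, ⟨hadj, by simp [hSu]⟩, ?_⟩
      rintro u' ⟨hadj', hc'⟩
      have hSu' : selON n m t u' = true := by
        by_contra h
        simp [h] at hc'
      exact huniq u' ⟨hadj', hSu'⟩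
  · intro h
    obtain ⟨c, hc1, hc2⟩ := h (fun _ => {0}) (fun _ => rfl)
    refine ⟨fun i => (c (Sum.inl (Sum.inl i))).isSome, fun j => ?_⟩
    obtain ⟨a, u, ⟨hadj, hcu⟩, huniq⟩ := hc2 (Sum.inl (Sum.inr j))
    have ha : a = 0 := by simpa using hc1 u a hcu
    -- u must be a variable vertex in C j
    rcases u with ((i | j') | ⟨i', b'⟩)
    rotate_left
    · exact absurd hadj (by simp [phiGraphON, SimpleGraph.fromRel_adj])
    · exact absurd hadj (by simp [phiGraphON, SimpleGraph.fromRel_adj])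
    have hiC : i ∈ C j := by
      simpa [phiGraphON, SimpleGraph.fromRel_adj] using hadj
    refine ⟨i, ⟨hiC, by simp [hcu]⟩, ?_⟩
    rintro i' ⟨hi'C, hti'⟩
    obtain ⟨a', hca'⟩ := Option.isSome_iff_exists.mp hti'
    have ha' : a' = 0 := by simpa using hc1 _ a' hca'
    have := huniq (Sum.inl (Sum.inl i'))
      ⟨by simp [phiGraphON, SimpleGraph.fromRel_adj, hi'C], by rw [hca', ha', ha]⟩
    simpa using this
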